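/- Performing a crimp on a crimpable segment of a 1D assigned crease pattern preserves the property that every suspicious interval is innocent: if every suspicious interval of the original pattern is innocent, then every suspicious interval of the pattern resulting from the crimp is innocent. -/

import Mathlib

open Finset

/-- A 1D crease pattern: paper `[0, L]` with creases `c 0 < c 1 < ⋯ < c (n-1)`
strictly inside the paper. -/
structure CreasePattern1D where
  L : ℝ
  n : ℕ
  c : Fin n → ℝ
  mono : StrictMono c
  pos : ∀ i, 0 < c i
  lt_len : ∀ i, c i < L

namespace CreasePattern1D

variable (P : CreasePattern1D)

/-- The folded-state map: `f x = x` on the first segment, and the slope flips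
sign at every crease (alternating reflection). -/
noncomputable def foldMap (x : ℝ) : ℝ :=
  (-1 : ℝ) ^ ((univ.filter fun i => P.c i ≤ x)).card * x
    + 2 * ∑ i ∈ univ.filter (fun i => P.c i ≤ x), (-1 : ℝ) ^ (i : ℕ) * P.c i

/-- Vertex `j` of the pattern: `pt 0 = 0` (left end), `pt (j) = c (j-1)` for
`1 ≤ j ≤ n`, and `pt j = L` (right end) for `j ≥ n+1`. -/
noncomputable def pt (j : ℕ) : ℝ :=
  if j = 0 then 0 else if h : j - 1 < P.n then P.c ⟨j - 1, h⟩ else P.L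

/-- The interval between creases `p ≤ q` is *suspicious* if the folded images of
the far endpoints of its two flaps both lie strictly outside the folded image of
the interval. -/
def Suspicious (p q : Fin P.n) : Prop :=
  p ≤ q ∧
  P.foldMap (P.pt (p : ℕ)) ∉ P.foldMap '' Set.Icc (P.c p) (P.c q) ∧
  P.foldMap (P.pt ((q : ℕ) + 2)) ∉ P.foldMap '' Set.Icc (P.c p) (P.c q)

/-- Number of mountain creases in the closed interval `[c p, c q]`
(`a i = true` means crease `i` is a mountain). -/
def countM (a : Fin P.n → Bool) (p q : Fin P.n) : ℕ :=
  ((univ : Finset (Fin P.n)).filter fun i => p ≤ i ∧ i ≤ q ∧ a i = true).card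

/-- Number of valley creases in the closed interval `[c p, c q]`. -/
def countV (a : Fin P.n → Bool) (p q : Fin P.n) : ℕ :=
  ((univ : Finset (Fin P.n)).filter fun i => p ≤ i ∧ i ≤ q ∧ a i = false).card

/-- An interval is *innocent* if its mountain and valley counts differ by at
most one. -/
def Innocent (a : Fin P.n → Bool) (p q : Fin P.n) : Prop :=
  (P.countM a p q : ℤ) - P.countV a p q ≤ 1 ∧
  (P.countV a p q : ℤ) - P.countM a p q ≤ 1

/-- Every suspicious interval is innocent. -/
def AllInnocent (a : Fin P.n → Bool) : Prop :=
  ∀ p q : Fin P.n, P.Suspicious p q → P.Innocent a p q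

end CreasePattern1D

namespace CreasePattern1D

variable (P : CreasePattern1D)

/-- The segment between the consecutive creases `c i` and `c (i+1)` is
*crimpable* if the two creases have opposite assignments and the segment is
nonstrictly shorter than both of its neighboring segments (its flaps). -/
def Crimpable (a : Fin P.n → Bool) (i : Fin P.n) : Prop :=
  ∃ h : (i : ℕ) + 1 < P.n,
    a i ≠ a ⟨(i : ℕ) + 1, h⟩ ∧
    P.c ⟨(i : ℕ) + 1, h⟩ - P.c i ≤ P.c i - P.pt (i : ℕ) ∧
    P.c ⟨(i : ℕ) + 1, h⟩ - P.c i ≤ P.pt ((i : ℕ) + 3) - P.c ⟨(i : ℕ) + 1, h⟩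

/-- The leftmost segment `[0, c 0]` is *end-foldable*: it is nonstrictly
shorter than the following segment. -/
def EndFoldableLeft : Prop :=
  ∃ h : 0 < P.n, P.c ⟨0, h⟩ - 0 ≤ P.pt 2 - P.c ⟨0, h⟩

/-- The rightmost segment `[c (n-1), L]` is *end-foldable*: it is nonstrictly
shorter than the preceding segment. -/
def EndFoldableRight : Prop :=
  ∃ h : 0 < P.n,
    P.L - P.c ⟨P.n - 1, by omega⟩ ≤ P.c ⟨P.n - 1, by omega⟩ - P.pt (P.n - 1)

/-- Some end segment is end-foldable. -/
def EndFoldable : Prop := P.EndFoldableLeft ∨ P.EndFoldableRight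

end CreasePattern1D

section Helpers
open Finset

lemma signsum (k : ℕ) : ∑ m ∈ Finset.range k, (-1:ℝ)^(m+1) = ((-1)^k - 1)/2 := by
  induction k with
  | zero => simp
  | succ k ih => rw [Finset.sum_range_succ, ih]; ring_nf

lemma sum_split {M : Type*} [AddCommMonoid M] (n n' i : ℕ) (hn' : n' = n - 2) (hi : i + 1 < n)
    (f g : ℕ → M) (hge : ∀ m, i ≤ m → m < n' → g m = f (m + 2)) :
    ∑ m ∈ range n, f m + ∑ m ∈ range i, g m
      = ∑ m ∈ range n', g m + (∑ m ∈ range i, f m + (f i + f (i + 1))) := by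
  have h1 : ∑ m ∈ range n, f m
      = ∑ m ∈ range (i+2), f m + ∑ m ∈ Finset.Ico (i+2) n, f m := by
    rw [Finset.range_eq_Ico, ← Finset.sum_Ico_consecutive f (by omega : 0 ≤ i+2) (by omega : i+2 ≤ n),
      ← Finset.range_eq_Ico]
  have h2 : ∑ m ∈ range (i+2), f m = ∑ m ∈ range i, f m + (f i + f (i+1)) := by
    rw [Finset.sum_range_succ, Finset.sum_range_succ]; ring_nf; abel
  have h3 : ∑ m ∈ range n', g m
      = ∑ m ∈ range i, g m + ∑ m ∈ Finset.Ico i n', g m := by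
    rw [Finset.range_eq_Ico, ← Finset.sum_Ico_consecutive g (by omega : 0 ≤ i) (by omega : i ≤ n'),
      ← Finset.range_eq_Ico]
  have h4 : ∑ m ∈ Finset.Ico (i+2) n, f m = ∑ m ∈ Finset.Ico i n', g m := by
    rw [Finset.sum_Ico_eq_sum_range f (i+2) n, Finset.sum_Ico_eq_sum_range g i n']
    have hlen : n - (i+2) = n' - i := by omega
    rw [hlen]
    refine Finset.sum_congr rfl fun m hm => ?_
    rw [Finset.mem_range] at hm
    rw [hge (i + m) (by omega) (by omega)]
    congr 1; omega
  rw [h1, h2, h3, h4]; abel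

namespace CreasePattern1D

lemma foldMap_eq (P : CreasePattern1D) (x : ℝ) :
    P.foldMap x
      = x + 2 * ∑ j : Fin P.n, (-1 : ℝ) ^ ((j : ℕ) + 1) * max (x - P.c j) 0 := by
  classical
  unfold foldMap
  set S := (univ : Finset (Fin P.n)).filter (fun i => P.c i ≤ x) with hS
  set k := S.card with hk
  have hkn : k ≤ P.n := by
    calc k ≤ (univ : Finset (Fin P.n)).card := card_filter_le _ _
    _ = P.n := by simp
  have hdc : ∀ j j' : Fin P.n, j ≤ j' → j' ∈ S → j ∈ S := by
    intro j j' hle hj'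
    simp only [hS, mem_filter, mem_univ, true_and] at hj' ⊢
    exact le_trans (P.mono.monotone hle) hj'
  have hmem : ∀ j : Fin P.n, j ∈ S ↔ (j : ℕ) < k := by
    intro j
    constructor
    · intro hj
      by_contra hcon
      push_neg at hcon
      have hsub : Finset.Iic j ⊆ S := fun j' hj' => hdc j' j (by simpa using hj') hj
      have h1 := Finset.card_le_card hsub
      rw [Fin.card_Iic] at h1
      omega
    · intro hj
      by_contra hcon
      have hsub : S ⊆ Finset.Iio j := by
        intro j' hj'
        simp only [Finset.mem_Iio]
        by_contra hge
        exact hcon (hdc j j' (le_of_not_gt hge) hj')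
      have h1 := Finset.card_le_card hsub
      rw [Fin.card_Iio] at h1
      omega
  have hSeq : S = (univ : Finset (Fin P.n)).filter (fun j : Fin P.n => (j : ℕ) < k) := by
    ext j
    constructor
    · intro hj
      simp only [Finset.mem_filter, Finset.mem_univ, true_and]
      exact (hmem j).1 hj
    · intro hj
      simp only [Finset.mem_filter, Finset.mem_univ, true_and] at hj
      exact (hmem j).2 hj
  have hsplit : ∑ j : Fin P.n, (-1:ℝ)^((j:ℕ)+1) * max (x - P.c j) 0
      = ∑ j ∈ S, (-1:ℝ)^((j:ℕ)+1) * (x - P.c j) := by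
    rw [← Finset.sum_filter_add_sum_filter_not univ (fun i => P.c i ≤ x)]
    have hz : ∑ j ∈ univ.filter (fun i => ¬ P.c i ≤ x), (-1:ℝ)^((j:ℕ)+1) * max (x - P.c j) 0 = 0 := by
      refine Finset.sum_eq_zero fun j hj => ?_
      rw [mem_filter] at hj
      rw [max_eq_right (by push_neg at hj; linarith [hj.2]), mul_zero]
    rw [hz, add_zero]
    exact Finset.sum_congr rfl fun j hj => by
      rw [mem_filter] at hj
      rw [max_eq_left (by linarith [hj.2])]
  have hT : ∑ j ∈ S, (-1:ℝ)^((j:ℕ)+1) = ((-1)^k - 1)/2 := by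
    rw [hSeq, Finset.sum_filter, Fin.sum_univ_eq_sum_range (fun m => if m < k then (-1:ℝ)^(m+1) else 0) P.n,
      ← Finset.sum_filter]
    have : (range P.n).filter (fun m => m < k) = range k := by
      ext m; simp only [mem_filter, mem_range]; omega
    rw [this, signsum]
  have hexp : ∑ j ∈ S, (-1:ℝ)^((j:ℕ)+1) * (x - P.c j)
      = (∑ j ∈ S, (-1:ℝ)^((j:ℕ)+1)) * x + ∑ j ∈ S, (-1:ℝ)^((j:ℕ)) * P.c j := by
    rw [Finset.sum_mul, ← Finset.sum_add_distrib]
    exact Finset.sum_congr rfl fun j _ => by rw [pow_succ]; ring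
  rw [hsplit, hexp, hT]
  have hpow : ((-1:ℝ))^k = (-1)^k := rfl
  ring

lemma continuous_foldMap (P : CreasePattern1D) : Continuous P.foldMap := by
  have : P.foldMap = fun x => x + 2 * ∑ j : Fin P.n, (-1 : ℝ) ^ ((j : ℕ) + 1) * max (x - P.c j) 0 :=
    funext fun x => P.foldMap_eq x
  rw [this]
  exact continuous_id.add (continuous_const.mul (continuous_finset_sum _ fun j _ =>
    continuous_const.mul ((continuous_id.sub continuous_const).max continuous_const)))

lemma ordConnected_image (P : CreasePattern1D) (a b : ℝ) :
    (P.foldMap '' Set.Icc a b).OrdConnected :=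
  ((isPreconnected_Icc).image _ (P.continuous_foldMap).continuousOn).ordConnected

end CreasePattern1D
end Helpers
section Helpers2
open Finset
namespace CreasePattern1D

lemma signsum_fin (n k : ℕ) (hkn : k ≤ n) :
    ∑ j : Fin n, (if (j:ℕ) < k then (-1:ℝ)^((j:ℕ)+1) else 0) = ((-1)^k - 1)/2 := by
  rw [Fin.sum_univ_eq_sum_range (fun m => if m < k then (-1:ℝ)^(m+1) else 0) n,
    ← Finset.sum_filter]
  have : (range n).filter (fun m => m < k) = range k := by
    ext m; simp only [mem_filter, mem_range]; omega
  rw [this, signsum]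

lemma foldMap_reflect (P : CreasePattern1D) (k : Fin P.n) (y : ℝ)
    (h1 : ∀ j : Fin P.n, j < k → P.c j ≤ y ∧ P.c j ≤ 2 * P.c k - y)
    (h2 : ∀ j : Fin P.n, k < j → y ≤ P.c j ∧ 2 * P.c k - y ≤ P.c j) :
    P.foldMap (2 * P.c k - y) = P.foldMap y := by
  classical
  rw [foldMap_eq, foldMap_eq]
  have key : ∀ j : Fin P.n,
      (-1:ℝ)^((j:ℕ)+1) * max (y - P.c j) 0 - (-1:ℝ)^((j:ℕ)+1) * max (2*P.c k - y - P.c j) 0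
      = (if (j:ℕ) < (k:ℕ) then (-1:ℝ)^((j:ℕ)+1) else 0) * (2*(y - P.c k))
        + (if j = k then (-1:ℝ)^((k:ℕ)+1) * (y - P.c k) else 0) := by
    intro j
    rcases lt_trichotomy j k with hlt | heq | hgt
    · obtain ⟨ha, hb⟩ := h1 j hlt
      rw [if_pos (show (j:ℕ) < (k:ℕ) from hlt), if_neg (ne_of_lt hlt)]
      rw [max_eq_left (by linarith), max_eq_left (by linarith)]
      ring
    · subst heq
      rw [if_neg (lt_irrefl _), if_pos rfl]
      have e1 : 2*P.c j - y - P.c j = P.c j - y := by ring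
      rw [e1]
      rcases le_total y (P.c j) with hy | hy
      · rw [max_eq_right (by linarith), max_eq_left (by linarith)]; ring
      · rw [max_eq_left (by linarith), max_eq_right (by linarith)]; ring
    · obtain ⟨ha, hb⟩ := h2 j hgt
      have hnlt : ¬ ((j:ℕ) < (k:ℕ)) := by
        have : (k:ℕ) < (j:ℕ) := hgt
        omega
      rw [if_neg hnlt, if_neg (ne_of_gt hgt)]
      rw [max_eq_right (by linarith), max_eq_right (by linarith)]
      ring
  have hdiff : (∑ j : Fin P.n, (-1:ℝ)^((j:ℕ)+1) * max (y - P.c j) 0)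
      - (∑ j : Fin P.n, (-1:ℝ)^((j:ℕ)+1) * max (2*P.c k - y - P.c j) 0)
      = -(y - P.c k) := by
    rw [← Finset.sum_sub_distrib]
    rw [Finset.sum_congr rfl (fun j _ => key j)]
    rw [Finset.sum_add_distrib, ← Finset.sum_mul,
      signsum_fin P.n (k:ℕ) (le_of_lt k.isLt)]
    rw [Finset.sum_ite_eq' univ k (fun _ => (-1:ℝ)^((k:ℕ)+1) * (y - P.c k))]
    simp only [mem_univ, if_pos]
    rw [pow_succ]
    ring
  linarith
end CreasePattern1D
end Helpers2
section Helpers3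
open Finset
namespace CreasePattern1D

lemma foldMap_between (P : CreasePattern1D) (a b x : ℝ) (hax : a ≤ x) (hxb : x ≤ b)
    (hsplit : ∀ j : Fin P.n, P.c j ≤ a ∨ b ≤ P.c j) :
    P.foldMap x ∈ Set.Icc (P.foldMap a) (P.foldMap b) ∪ Set.Icc (P.foldMap b) (P.foldMap a) := by
  classical
  set T := ∑ j ∈ univ.filter (fun j : Fin P.n => P.c j ≤ a), (-1:ℝ)^((j:ℕ)+1) with hT
  set CC := ∑ j ∈ univ.filter (fun j : Fin P.n => P.c j ≤ a), (-1:ℝ)^((j:ℕ)+1) * (- P.c j) with hCC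
  have key : ∀ t, a ≤ t → t ≤ b → P.foldMap t = (1 + 2*T) * t + 2*CC := by
    intro t hat htb
    rw [foldMap_eq]
    rw [← Finset.sum_filter_add_sum_filter_not univ (fun j : Fin P.n => P.c j ≤ a)]
    have hz : ∑ j ∈ univ.filter (fun j : Fin P.n => ¬ P.c j ≤ a),
        (-1:ℝ)^((j:ℕ)+1) * max (t - P.c j) 0 = 0 :=
      Finset.sum_eq_zero fun j hj => by
        rw [mem_filter] at hj
        have hbj : b ≤ P.c j := (hsplit j).resolve_left hj.2
        rw [max_eq_right (by linarith), mul_zero]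
    rw [hz, add_zero]
    have he : ∑ j ∈ univ.filter (fun j : Fin P.n => P.c j ≤ a),
        (-1:ℝ)^((j:ℕ)+1) * max (t - P.c j) 0
        = ∑ j ∈ univ.filter (fun j : Fin P.n => P.c j ≤ a),
          ((-1:ℝ)^((j:ℕ)+1) * t + (-1:ℝ)^((j:ℕ)+1) * (- P.c j)) := by
      refine Finset.sum_congr rfl fun j hj => ?_
      rw [mem_filter] at hj
      rw [max_eq_left (by linarith [hj.2])]
      ring
    rw [he, Finset.sum_add_distrib, ← Finset.sum_mul, ← hT, ← hCC]
    ring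
  rw [key a le_rfl (le_trans hax hxb), key b (le_trans hax hxb) le_rfl, key x hax hxb]
  rcases le_total 0 (1 + 2*T) with hs | hs
  · left; rw [Set.mem_Icc]; constructor <;> nlinarith
  · right; rw [Set.mem_Icc]; constructor <;> nlinarith

end CreasePattern1D
end Helpers3
set_option maxHeartbeats 2000000 in
open Finset in
/-- Crimping preserves that every suspicious interval is
innocent.  Here `P'` (with assignment `a'`) is the result of performing the
crimp at the crimpable segment between creases `i` and `i+1` of `P`: the two
creases are removed, and all creases and paper beyond them move left by twice
the length of the crimped segment (the three segments involved are glued into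
one). -/
theorem crimp_preserves_allInnocent (P P' : CreasePattern1D)
    (a : Fin P.n → Bool) (a' : Fin P'.n → Bool)
    (i : Fin P.n) (hi : (i : ℕ) + 1 < P.n)
    (hcrimp : P.Crimpable a i)
    (hn : P'.n = P.n - 2)
    (hL : P'.L = P.L - 2 * (P.c ⟨(i : ℕ) + 1, hi⟩ - P.c i))
    (hc : ∀ j : Fin P'.n,
      P'.c j = if hj : (j : ℕ) < (i : ℕ) then P.c ⟨(j : ℕ), hj.trans i.isLt⟩
        else P.c ⟨(j : ℕ) + 2, by have := j.isLt; omega⟩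
          - 2 * (P.c ⟨(i : ℕ) + 1, hi⟩ - P.c i))
    (ha : ∀ j : Fin P'.n,
      a' j = if hj : (j : ℕ) < (i : ℕ) then a ⟨(j : ℕ), hj.trans i.isLt⟩
        else a ⟨(j : ℕ) + 2, by have := j.isLt; omega⟩)
    (h : P.AllInnocent a) :
    P'.AllInnocent a' := by
  classical
  obtain ⟨hi2, hne, hflL, hflR⟩ := hcrimp
  set δ : ℝ := P.c ⟨(i:ℕ)+1, hi⟩ - P.c i with hδ
  have hδpos : 0 < δ := sub_pos.2 (P.mono (show i < ⟨(i:ℕ)+1, hi⟩ by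
    simp [Fin.lt_def]))
  set C : ℕ → ℝ := fun m => if h : m < P.n then P.c ⟨m, h⟩ else P.L with hCdef
  have hCc : ∀ (m : ℕ) (hm : m < P.n), C m = P.c ⟨m, hm⟩ := fun m hm => dif_pos hm
  have hCL : ∀ m, P.n ≤ m → C m = P.L := fun m hm => dif_neg (by omega)
  have hCmono : Monotone C := by
    intro m m' hmm
    by_cases h1 : m < P.n
    · by_cases h2 : m' < P.n
      · rw [hCc m h1, hCc m' h2]
        exact P.mono.monotone (show (⟨m,h1⟩ : Fin P.n) ≤ ⟨m',h2⟩ from hmm)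
      · rw [hCc m h1, hCL m' (by omega)]
        exact le_of_lt (P.lt_len _)
    · rw [hCL m (by omega), hCL m' (by omega)]
  have hiN : (i:ℕ) + 1 < P.n := hi
  have hn' : P'.n = P.n - 2 := hn
  have hci : P.c i = C (i:ℕ) := by rw [hCc _ i.isLt]
  have hci1 : P.c ⟨(i:ℕ)+1, hi⟩ = C ((i:ℕ)+1) := by rw [hCc _ hi]
  have hδ' : δ = C ((i:ℕ)+1) - C (i:ℕ) := by rw [hδ, hci1, hci]
  have hCj : ∀ j : Fin P.n, C (j:ℕ) = P.c j := fun j => by rw [hCc _ j.isLt, Fin.eta]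
  have hptC : ∀ m : ℕ, P.pt (m+1) = C m := by
    intro m
    unfold CreasePattern1D.pt
    rw [if_neg (by omega)]
    simp only [Nat.add_sub_cancel]; rfl
  have hpt0 : P.pt 0 = 0 := by unfold CreasePattern1D.pt; rw [if_pos rfl]
  have hflL' : δ ≤ P.c i - P.pt (i:ℕ) := hflL
  have hflR' : δ ≤ P.pt ((i:ℕ)+3) - P.c ⟨(i:ℕ)+1, hi⟩ := hflR
  have hlow : ∀ m, m < (i:ℕ) → C m ≤ C (i:ℕ) - δ := by
    intro m hm
    have hpti : P.pt (i:ℕ) = C ((i:ℕ)-1) := by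
      have e := hptC ((i:ℕ)-1)
      rw [show ((i:ℕ)-1)+1 = (i:ℕ) from by omega] at e
      exact e
    have h1 : C m ≤ C ((i:ℕ)-1) := hCmono (by omega)
    rw [hpti, hci] at hflL'
    linarith
  have hhigh : ∀ m, (i:ℕ)+2 ≤ m → C (i:ℕ) + 2*δ ≤ C m := by
    intro m hm
    have hpt3 : P.pt ((i:ℕ)+3) = C ((i:ℕ)+2) := hptC ((i:ℕ)+2)
    rw [hpt3, hci1] at hflR'
    have h1 : C ((i:ℕ)+2) ≤ C m := hCmono hm
    rw [hδ'] at hflR' ⊢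
    linarith
  set C' : ℕ → ℝ := fun m => if m < (i:ℕ) then C m else C (m+2) - 2*δ with hC'def
  have hC'lt : ∀ m, m < (i:ℕ) → C' m = C m := fun m hm => if_pos hm
  have hC'ge : ∀ m, (i:ℕ) ≤ m → C' m = C (m+2) - 2*δ := fun m hm => if_neg (by omega)
  have hC'c : ∀ j : Fin P'.n, P'.c j = C' (j:ℕ) := by
    intro j
    rw [hc j]
    by_cases hj : (j:ℕ) < (i:ℕ)
    · rw [dif_pos hj, hC'lt _ hj, hCc]
    · rw [dif_neg hj, hC'ge _ (by omega), hCc _ (by have := j.isLt; omega), hδ]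
  have hin' : (i:ℕ) ≤ P'.n := by omega
  have hpt'C : ∀ m : ℕ, P'.pt (m+1) = C' m := by
    intro m
    unfold CreasePattern1D.pt
    rw [if_neg (by omega)]
    simp only [Nat.add_sub_cancel]
    by_cases h1 : m < P'.n
    · rw [dif_pos h1]
      exact hC'c ⟨m, h1⟩
    · rw [dif_neg h1, hL, hC'ge m (by omega), hCL (m+2) (by omega), hδ]
  have hpt'0 : P'.pt 0 = 0 := by unfold CreasePattern1D.pt; rw [if_pos rfl]
  -- fold transfer lemmas
  have hfoldL : ∀ x : ℝ, x ≤ C (i:ℕ) → P'.foldMap x = P.foldMap x := by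
    intro x hx
    rw [CreasePattern1D.foldMap_eq, CreasePattern1D.foldMap_eq]
    set f : ℕ → ℝ := fun m => (-1:ℝ)^(m+1) * max (x - C m) 0 with hfdef
    set g : ℕ → ℝ := fun m => (-1:ℝ)^(m+1) * max (x - C' m) 0 with hgdef
    have e1 : ∑ j : Fin P.n, (-1:ℝ)^((j:ℕ)+1) * max (x - P.c j) 0
        = ∑ m ∈ range P.n, f m := by
      rw [← Fin.sum_univ_eq_sum_range f P.n]
      exact Finset.sum_congr rfl fun j _ => by rw [hfdef]; simp only; rw [hCc _ j.isLt]
    have e2 : ∑ j : Fin P'.n, (-1:ℝ)^((j:ℕ)+1) * max (x - P'.c j) 0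
        = ∑ m ∈ range P'.n, g m := by
      rw [← Fin.sum_univ_eq_sum_range g P'.n]
      exact Finset.sum_congr rfl fun j _ => by rw [hgdef]; simp only; rw [hC'c j]
    rw [e1, e2]
    have hge : ∀ m, (i:ℕ) ≤ m → m < P'.n → g m = f (m+2) := by
      intro m h1 h2
      rw [hfdef, hgdef]; simp only
      rw [hC'ge m h1]
      have z := hhigh (m+2) (by omega)
      rw [max_eq_right (by linarith), max_eq_right (by linarith)]
      rw [show m+2+1 = (m+1)+1+1 from rfl, pow_succ, pow_succ]
      ring
    have hid := sum_split P.n P'.n (i:ℕ) hn' hiN f g hge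
    have hlowi : ∑ m ∈ range (i:ℕ), g m = ∑ m ∈ range (i:ℕ), f m := by
      refine Finset.sum_congr rfl fun m hm => ?_
      rw [mem_range] at hm
      rw [hgdef, hfdef]; simp only
      rw [hC'lt m hm]
    have hfi : f (i:ℕ) = 0 := by
      rw [hfdef]; simp only
      rw [max_eq_right (by linarith), mul_zero]
    have hfi1 : f ((i:ℕ)+1) = 0 := by
      have hm : C (i:ℕ) ≤ C ((i:ℕ)+1) := hCmono (by omega)
      rw [hfdef]; simp only
      rw [max_eq_right (by linarith), mul_zero]
    rw [hlowi, hfi, hfi1] at hid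
    have : ∑ m ∈ range P.n, f m = ∑ m ∈ range P'.n, g m := by linarith
    rw [this]
  have hfoldR : ∀ y : ℝ, C ((i:ℕ)+1) ≤ y → P'.foldMap (y - 2*δ) = P.foldMap y := by
    intro y hy
    rw [CreasePattern1D.foldMap_eq, CreasePattern1D.foldMap_eq]
    set f : ℕ → ℝ := fun m => (-1:ℝ)^(m+1) * max (y - C m) 0 with hfdef
    set g : ℕ → ℝ := fun m => (-1:ℝ)^(m+1) * max (y - 2*δ - C' m) 0 with hgdef
    have e1 : ∑ j : Fin P.n, (-1:ℝ)^((j:ℕ)+1) * max (y - P.c j) 0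
        = ∑ m ∈ range P.n, f m := by
      rw [← Fin.sum_univ_eq_sum_range f P.n]
      exact Finset.sum_congr rfl fun j _ => by rw [hfdef]; simp only; rw [hCc _ j.isLt]
    have e2 : ∑ j : Fin P'.n, (-1:ℝ)^((j:ℕ)+1) * max (y - 2*δ - P'.c j) 0
        = ∑ m ∈ range P'.n, g m := by
      rw [← Fin.sum_univ_eq_sum_range g P'.n]
      exact Finset.sum_congr rfl fun j _ => by rw [hgdef]; simp only; rw [hC'c j]
    rw [e1, e2]
    have hge : ∀ m, (i:ℕ) ≤ m → m < P'.n → g m = f (m+2) := by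
      intro m h1 h2
      rw [hfdef, hgdef]; simp only
      rw [hC'ge m h1]
      have e : y - 2*δ - (C (m+2) - 2*δ) = y - C (m+2) := by ring
      rw [e, show m+2+1 = (m+1)+1+1 from rfl, pow_succ, pow_succ]
      ring
    have hid := sum_split P.n P'.n (i:ℕ) hn' hiN f g hge
    have hAB : ∑ m ∈ range (i:ℕ), f m
        = ∑ m ∈ range (i:ℕ), g m + (((-1:ℝ)^(i:ℕ) - 1)/2) * (2*δ) := by
      have hfg : ∀ m ∈ range (i:ℕ), f m = g m + (-1:ℝ)^(m+1) * (2*δ) := by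
        intro m hm
        rw [mem_range] at hm
        have hl := hlow m hm
        rw [hfdef, hgdef]; simp only
        rw [hC'lt m hm]
        rw [max_eq_left (by rw [hδ'] at *; linarith), max_eq_left (by rw [hδ'] at *; linarith)]
        ring
      rw [Finset.sum_congr rfl hfg, Finset.sum_add_distrib, ← Finset.sum_mul, signsum]
    have hfi : f (i:ℕ) = -((-1:ℝ)^(i:ℕ)) * (y - C (i:ℕ)) := by
      rw [hfdef]; simp only
      rw [max_eq_left (by have := hCmono (show (i:ℕ) ≤ (i:ℕ)+1 by omega); linarith), pow_succ]
      ring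
    have hfi1 : f ((i:ℕ)+1) = (-1:ℝ)^(i:ℕ) * (y - C ((i:ℕ)+1)) := by
      rw [hfdef]; simp only
      rw [max_eq_left (by linarith), pow_succ, pow_succ]
      ring
    rw [hfi, hfi1] at hid
    have hkey : ∑ m ∈ range P.n, f m = ∑ m ∈ range P'.n, g m - δ := by
      rw [hδ'] at hAB ⊢
      nlinarith [hid, hAB]
    rw [hkey]
    ring
  -- assignment bookkeeping
  set Ab : ℕ → Bool := fun m => if hm : m < P.n then a ⟨m, hm⟩ else false with hAbdef
  have hAb : ∀ (m : ℕ) (hm : m < P.n), Ab m = a ⟨m, hm⟩ := fun m hm => dif_pos hm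
  have hA'b : ∀ j : Fin P'.n, a' j = if (j:ℕ) < (i:ℕ) then Ab (j:ℕ) else Ab ((j:ℕ)+2) := by
    intro j
    rw [ha j]
    by_cases hj : (j:ℕ) < (i:ℕ)
    · rw [dif_pos hj, if_pos hj, hAb]
    · rw [dif_neg hj, if_neg hj, hAb _ (by have := j.isLt; omega)]
  have hAbne : (Ab (i:ℕ) = true ∧ Ab ((i:ℕ)+1) = false)
      ∨ (Ab (i:ℕ) = false ∧ Ab ((i:ℕ)+1) = true) := by
    have e1 : Ab (i:ℕ) = a i := by rw [hAb _ i.isLt, Fin.eta]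
    have e2 : Ab ((i:ℕ)+1) = a ⟨(i:ℕ)+1, hi⟩ := hAb _ hi
    have hne' : a i ≠ a ⟨(i:ℕ)+1, hi⟩ := hne
    rw [e1, e2]
    cases hb1 : a i <;> cases hb2 : a ⟨(i:ℕ)+1, hi⟩
    · exact absurd (hb1.trans hb2.symm) hne'
    · exact Or.inr ⟨rfl, rfl⟩
    · exact Or.inl ⟨rfl, rfl⟩
    · exact absurd (hb1.trans hb2.symm) hne'
  -- counting machinery
  have hcnt : ∀ (b : Bool) (r s : Fin P.n),
      ((univ : Finset (Fin P.n)).filter fun j => r ≤ j ∧ j ≤ s ∧ a j = b).card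
      = ∑ m ∈ range P.n, (if r.val ≤ m ∧ m ≤ s.val ∧ Ab m = b then 1 else 0) := by
    intro b r s
    rw [Finset.card_filter,
      ← Fin.sum_univ_eq_sum_range (fun m => if r.val ≤ m ∧ m ≤ s.val ∧ Ab m = b then 1 else 0) P.n]
    refine Finset.sum_congr rfl fun j _ => ?_
    refine if_congr ?_ rfl rfl
    rw [Fin.le_def, Fin.le_def, hAb _ j.isLt, Fin.eta]
  have hcnt' : ∀ (b : Bool) (r s : Fin P'.n),
      ((univ : Finset (Fin P'.n)).filter fun j => r ≤ j ∧ j ≤ s ∧ a' j = b).card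
      = ∑ m ∈ range P'.n,
        (if r.val ≤ m ∧ m ≤ s.val ∧ (if m < (i:ℕ) then Ab m else Ab (m+2)) = b then 1 else 0) := by
    intro b r s
    rw [Finset.card_filter,
      ← Fin.sum_univ_eq_sum_range
        (fun m => if r.val ≤ m ∧ m ≤ s.val ∧ (if m < (i:ℕ) then Ab m else Ab (m+2)) = b then 1 else 0) P'.n]
    refine Finset.sum_congr rfl fun j _ => ?_
    refine if_congr ?_ rfl rfl
    rw [Fin.le_def, Fin.le_def, hA'b j]
  have hcM : ∀ r s : Fin P.n, P.countM a r s
      = ∑ m ∈ range P.n, (if r.val ≤ m ∧ m ≤ s.val ∧ Ab m = true then 1 else 0) :=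
    fun r s => hcnt true r s
  have hcV : ∀ r s : Fin P.n, P.countV a r s
      = ∑ m ∈ range P.n, (if r.val ≤ m ∧ m ≤ s.val ∧ Ab m = false then 1 else 0) :=
    fun r s => hcnt false r s
  have hcM' : ∀ r s : Fin P'.n, P'.countM a' r s
      = ∑ m ∈ range P'.n,
        (if r.val ≤ m ∧ m ≤ s.val ∧ (if m < (i:ℕ) then Ab m else Ab (m+2)) = true then 1 else 0) :=
    fun r s => hcnt' true r s
  have hcV' : ∀ r s : Fin P'.n, P'.countV a' r s
      = ∑ m ∈ range P'.n,
        (if r.val ≤ m ∧ m ≤ s.val ∧ (if m < (i:ℕ) then Ab m else Ab (m+2)) = false then 1 else 0) :=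
    fun r s => hcnt' false r s
  -- main argument
  intro p q hsusp
  obtain ⟨hpq, hsl, hsr⟩ := hsusp
  have hpqv : p.val ≤ q.val := hpq
  have hqn' : q.val < P'.n := q.isLt
  have hpn : p.val < P.n := by omega
  have hqn : q.val < P.n := by omega
  have hq2n : q.val + 2 < P.n := by omega
  have hp2n : p.val + 2 < P.n := by omega
  -- endpoint transfer
  have hEL : p.val ≤ (i:ℕ) → P'.foldMap (P'.pt p.val) = P.foldMap (P.pt p.val) := by
    intro hp
    rcases Nat.eq_zero_or_pos p.val with h0 | h0
    · rw [h0, hpt'0, hpt0]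
      exact hfoldL 0 (le_of_lt (lt_of_lt_of_le (P.pos i) (le_of_eq hci)))
    · have e1 : P'.pt p.val = C' (p.val - 1) := by
        have e := hpt'C (p.val - 1)
        rw [show (p.val-1)+1 = p.val from by omega] at e
        exact e
      have e2 : P.pt p.val = C (p.val - 1) := by
        have e := hptC (p.val - 1)
        rw [show (p.val-1)+1 = p.val from by omega] at e
        exact e
      have e3 : C' (p.val-1) = C (p.val-1) := hC'lt _ (by omega)
      rw [e1, e3, e2]
      refine hfoldL _ ?_
      have := hlow (p.val-1) (by omega)
      linarith
  have hEL2 : (i:ℕ) < p.val → P'.foldMap (P'.pt p.val) = P.foldMap (P.pt (p.val+2)) := by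
    intro hp
    have e1 : P'.pt p.val = C' (p.val - 1) := by
      have e := hpt'C (p.val - 1)
      rw [show (p.val-1)+1 = p.val from by omega] at e
      exact e
    have e2 : C' (p.val-1) = C (p.val+1) - 2*δ := by
      rw [hC'ge _ (by omega), show p.val-1+2 = p.val+1 from by omega]
    have e3 : P.pt (p.val+2) = C (p.val+1) := by
      have e := hptC (p.val+1)
      rw [show (p.val+1)+1 = p.val+2 from by omega] at e
      exact e
    rw [e1, e2, e3]
    refine hfoldR _ (hCmono (by omega))
  have hER1 : q.val + 1 < (i:ℕ) → P'.foldMap (P'.pt (q.val+2)) = P.foldMap (P.pt (q.val+2)) := by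
    intro hq
    have e1 : P'.pt (q.val+2) = C' (q.val+1) := by
      have e := hpt'C (q.val+1)
      rw [show (q.val+1)+1 = q.val+2 from by omega] at e
      exact e
    have e2 : C' (q.val+1) = C (q.val+1) := hC'lt _ (by omega)
    have e3 : P.pt (q.val+2) = C (q.val+1) := by
      have e := hptC (q.val+1)
      rw [show (q.val+1)+1 = q.val+2 from by omega] at e
      exact e
    rw [e1, e2, e3]
    refine hfoldL _ ?_
    have := hlow (q.val+1) (by omega)
    linarith
  have hER2 : (i:ℕ) ≤ q.val + 1 → P'.foldMap (P'.pt (q.val+2)) = P.foldMap (P.pt (q.val+2+2)) := by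
    intro hq
    have e1 : P'.pt (q.val+2) = C' (q.val+1) := by
      have e := hpt'C (q.val+1)
      rw [show (q.val+1)+1 = q.val+2 from by omega] at e
      exact e
    have e2 : C' (q.val+1) = C (q.val+3) - 2*δ := by
      rw [hC'ge _ (by omega), show q.val+1+2 = q.val+3 from by omega]
    have e3 : P.pt (q.val+2+2) = C (q.val+3) := by
      have e := hptC (q.val+3)
      rw [show (q.val+3)+1 = q.val+2+2 from by omega] at e
      exact e
    rw [e1, e2, e3]
    refine hfoldR _ (hCmono (by omega))
  have hpairM : (if Ab (i:ℕ) = true then (1:ℕ) else 0) + (if Ab ((i:ℕ)+1) = true then 1 else 0) = 1 := by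
    rcases hAbne with ⟨e1,e2⟩|⟨e1,e2⟩ <;> rw [e1,e2] <;> norm_num
  have hpairV : (if Ab (i:ℕ) = false then (1:ℕ) else 0) + (if Ab ((i:ℕ)+1) = false then 1 else 0) = 1 := by
    rcases hAbne with ⟨e1,e2⟩|⟨e1,e2⟩ <;> rw [e1,e2] <;> norm_num
  have hcnteqM : p.val ≤ (i:ℕ) → (i:ℕ) ≤ q.val + 1 → ∀ b : Bool,
      (∑ m ∈ range P.n, (if p.val ≤ m ∧ m ≤ q.val+2 ∧ Ab m = b then 1 else 0))
      = (∑ m ∈ range P'.n,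
          (if p.val ≤ m ∧ m ≤ q.val ∧ (if m < (i:ℕ) then Ab m else Ab (m+2)) = b then 1 else 0))
        + ((if Ab (i:ℕ) = b then 1 else 0) + (if Ab ((i:ℕ)+1) = b then 1 else 0)) := by
    intro hp hq b
    have hge : ∀ m, (i:ℕ) ≤ m → m < P'.n →
        (if p.val ≤ m ∧ m ≤ q.val ∧ (if m < (i:ℕ) then Ab m else Ab (m+2)) = b then (1:ℕ) else 0)
        = (if p.val ≤ m+2 ∧ m+2 ≤ q.val+2 ∧ Ab (m+2) = b then 1 else 0) := by
      intro m h1 h2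
      rw [if_neg (show ¬ m < (i:ℕ) by omega)]
      refine if_congr ?_ rfl rfl
      constructor
      · rintro ⟨x1,x2,x3⟩; exact ⟨by omega, by omega, x3⟩
      · rintro ⟨x1,x2,x3⟩; exact ⟨by omega, by omega, x3⟩
    have hid := sum_split P.n P'.n (i:ℕ) hn' hiN
      (fun m => if p.val ≤ m ∧ m ≤ q.val+2 ∧ Ab m = b then (1:ℕ) else 0)
      (fun m => if p.val ≤ m ∧ m ≤ q.val ∧ (if m < (i:ℕ) then Ab m else Ab (m+2)) = b then 1 else 0)
      hge
    have hz : ∑ m ∈ range (i:ℕ),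
        (if p.val ≤ m ∧ m ≤ q.val ∧ (if m < (i:ℕ) then Ab m else Ab (m+2)) = b then (1:ℕ) else 0)
        = ∑ m ∈ range (i:ℕ), (if p.val ≤ m ∧ m ≤ q.val+2 ∧ Ab m = b then 1 else 0) := by
      refine Finset.sum_congr rfl fun m hm => ?_
      rw [mem_range] at hm
      rw [if_pos hm]
      refine if_congr ?_ rfl rfl
      constructor
      · rintro ⟨x1,x2,x3⟩; exact ⟨x1, by omega, x3⟩
      · rintro ⟨x1,x2,x3⟩; exact ⟨x1, by omega, x3⟩
    have hFi : (if p.val ≤ (i:ℕ) ∧ (i:ℕ) ≤ q.val+2 ∧ Ab (i:ℕ) = b then (1:ℕ) else 0)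
        = (if Ab (i:ℕ) = b then 1 else 0) := by
      refine if_congr ?_ rfl rfl
      constructor
      · rintro ⟨_,_,x3⟩; exact x3
      · intro x3; exact ⟨by omega, by omega, x3⟩
    have hFi1 : (if p.val ≤ (i:ℕ)+1 ∧ (i:ℕ)+1 ≤ q.val+2 ∧ Ab ((i:ℕ)+1) = b then (1:ℕ) else 0)
        = (if Ab ((i:ℕ)+1) = b then 1 else 0) := by
      refine if_congr ?_ rfl rfl
      constructor
      · rintro ⟨_,_,x3⟩; exact x3
      · intro x3; exact ⟨by omega, by omega, x3⟩
    rw [hz, hFi, hFi1] at hid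
    omega
  by_cases hcase1 : q.val < (i:ℕ)
  · -- interval entirely to the left of the crimp
    have hIm : P'.foldMap '' Set.Icc (P'.c p) (P'.c q)
        = P.foldMap '' Set.Icc (P.c ⟨p.val, hpn⟩) (P.c ⟨q.val, hqn⟩) := by
      have hcp : P'.c p = P.c ⟨p.val, hpn⟩ := by
        rw [hC'c p, hC'lt _ (by omega), hCc _ hpn]
      have hcq : P'.c q = P.c ⟨q.val, hqn⟩ := by
        rw [hC'c q, hC'lt _ (by omega), hCc _ hqn]
      rw [hcp, hcq]
      refine Set.image_congr fun x hx => ?_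
      refine hfoldL x ?_
      have h1 : P.c ⟨q.val, hqn⟩ = C q.val := (hCc _ hqn).symm
      have h2 := hlow q.val hcase1
      have h3 := hx.2
      rw [h1] at h3
      linarith
    rw [hIm] at hsl hsr
    rw [hEL (by omega)] at hsl
    have hcnteqL : ∀ b : Bool,
        (∑ m ∈ range P.n, (if p.val ≤ m ∧ m ≤ q.val ∧ Ab m = b then 1 else 0))
        = ∑ m ∈ range P'.n,
          (if p.val ≤ m ∧ m ≤ q.val ∧ (if m < (i:ℕ) then Ab m else Ab (m+2)) = b then 1 else 0) := by
      intro b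
      have h1 : ∑ m ∈ range P.n, (if p.val ≤ m ∧ m ≤ q.val ∧ Ab m = b then (1:ℕ) else 0)
          = ∑ m ∈ range P'.n, (if p.val ≤ m ∧ m ≤ q.val ∧ Ab m = b then 1 else 0) := by
        refine (Finset.sum_subset (Finset.range_subset_range.2 (show P'.n ≤ P.n by omega)) ?_).symm
        intro m hm1 hm2
        rw [mem_range] at hm1 hm2
        rw [if_neg]
        rintro ⟨hx1, hx2, hx3⟩
        omega
      rw [h1]
      refine Finset.sum_congr rfl fun m hm => ?_
      rw [mem_range] at hm
      rcases le_or_gt m q.val with hmq | hmq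
      · rw [if_pos (show m < (i:ℕ) by omega)]
      · rw [if_neg (by rintro ⟨hx1,hx2,hx3⟩; omega), if_neg (by rintro ⟨hx1,hx2,hx3⟩; omega)]
    have hMeqL : P.countM a ⟨p.val,hpn⟩ ⟨q.val,hqn⟩ = P'.countM a' p q := by
      rw [hcM, hcM']; exact hcnteqL true
    have hVeqL : P.countV a ⟨p.val,hpn⟩ ⟨q.val,hqn⟩ = P'.countV a' p q := by
      rw [hcV, hcV']; exact hcnteqL false
    by_cases hq1 : q.val + 1 < (i:ℕ)
    · -- no interaction at all
      rw [hER1 hq1] at hsr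
      have hS : P.Suspicious ⟨p.val, hpn⟩ ⟨q.val, hqn⟩ :=
        ⟨by rw [Fin.mk_le_mk]; omega, hsl, hsr⟩
      have I1 := (h _ _ hS).1
      have I2 := (h _ _ hS).2
      exact ⟨by omega, by omega⟩
    · -- q.val + 1 = i : boundary on the right
      have hqi : q.val + 1 = (i:ℕ) := by omega
      rw [hER2 (by omega)] at hsr
      by_cases hciJ : P.foldMap (P.c i)
          ∈ P.foldMap '' Set.Icc (P.c ⟨p.val, hpn⟩) (P.c ⟨q.val, hqn⟩)
      · -- use the interval [p, q+2] = [p, i+1]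
        have hmidL : ∀ z, P.c ⟨q.val, hqn⟩ ≤ z → z ≤ P.c i →
            P.foldMap z ∈ P.foldMap '' Set.Icc (P.c ⟨p.val, hpn⟩) (P.c ⟨q.val, hqn⟩) := by
          intro z hz1 hz2
          have hsplitb : ∀ j : Fin P.n, P.c j ≤ P.c ⟨q.val, hqn⟩ ∨ P.c i ≤ P.c j := by
            intro j
            rcases le_or_gt (j:ℕ) q.val with hj | hj
            · left; exact P.mono.monotone (show j ≤ ⟨q.val,hqn⟩ from hj)
            · right; exact P.mono.monotone (show i ≤ j from by
                rw [Fin.le_def]; omega)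
          have hb := P.foldMap_between (P.c ⟨q.val,hqn⟩) (P.c i) z hz1 hz2 hsplitb
          have hq0J : P.foldMap (P.c ⟨q.val,hqn⟩)
              ∈ P.foldMap '' Set.Icc (P.c ⟨p.val,hpn⟩) (P.c ⟨q.val,hqn⟩) :=
            ⟨P.c ⟨q.val,hqn⟩,
              ⟨P.mono.monotone (show (⟨p.val,hpn⟩:Fin P.n) ≤ ⟨q.val,hqn⟩ from by
                rw [Fin.mk_le_mk]; omega), le_rfl⟩, rfl⟩
          rcases hb with hb | hb
          · exact (P.ordConnected_image _ _).out hq0J hciJ hb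
          · exact (P.ordConnected_image _ _).out hciJ hq0J hb
        have bigeq : P.foldMap '' Set.Icc (P.c ⟨p.val, hpn⟩) (P.c ⟨q.val+2, hq2n⟩)
            = P.foldMap '' Set.Icc (P.c ⟨p.val, hpn⟩) (P.c ⟨q.val, hqn⟩) := by
          refine Set.Subset.antisymm ?_
            (Set.image_mono (Set.Icc_subset_Icc le_rfl
              (P.mono.monotone (show (⟨q.val,hqn⟩:Fin P.n) ≤ ⟨q.val+2,hq2n⟩ from by
                rw [Fin.mk_le_mk]; omega))))
          rintro _ ⟨x, ⟨hx1, hx2⟩, rfl⟩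
          rcases le_total x (P.c ⟨q.val, hqn⟩) with h1 | h1
          · exact ⟨x, ⟨hx1, h1⟩, rfl⟩
          · rcases le_total x (P.c i) with h2 | h2
            · exact hmidL x h1 h2
            · -- x ∈ [c i, c (i+1)] : reflect at i
              have hx2' : x ≤ C ((i:ℕ)+1) := by
                have e : P.c ⟨q.val+2, hq2n⟩ = C (q.val+2) := (hCc _ _).symm
                rw [e, show q.val+2 = (i:ℕ)+1 from by omega] at hx2
                exact hx2
              have hcix : C (i:ℕ) ≤ x := by rw [hci] at h2; exact h2
              have hrefl : P.foldMap (2*P.c i - x) = P.foldMap x := by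
                refine P.foldMap_reflect i x (fun j hj => ⟨?_, ?_⟩) (fun j hj => ⟨?_, ?_⟩)
                · rw [← hCj j]
                  have := hlow (j:ℕ) hj
                  linarith
                · rw [← hCj j, hci]
                  have := hlow (j:ℕ) hj
                  rw [hδ'] at this hδpos
                  linarith
                · rw [← hCj j]
                  have h5 : C ((i:ℕ)+1) ≤ C (j:ℕ) := hCmono (show (i:ℕ)+1 ≤ (j:ℕ) from hj)
                  linarith
                · rw [← hCj j, hci]
                  have h5 : C (i:ℕ) ≤ C (j:ℕ) := hCmono (by omega)
                  linarith
              rw [← hrefl]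
              refine hmidL _ ?_ ?_
              · have e : P.c ⟨q.val,hqn⟩ = C q.val := (hCc _ _).symm
                rw [e, hci]
                have := hlow q.val hcase1
                rw [hδ'] at this
                linarith
              · rw [hci]
                linarith
        have hS : P.Suspicious ⟨p.val, hpn⟩ ⟨q.val+2, hq2n⟩ := by
          refine ⟨by rw [Fin.mk_le_mk]; omega, ?_, ?_⟩
          · show P.foldMap (P.pt p.val) ∉ _
            rw [bigeq]
            exact hsl
          · show P.foldMap (P.pt (q.val+2+2)) ∉ _
            rw [bigeq]
            exact hsr
        have I1 := (h _ _ hS).1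
        have I2 := (h _ _ hS).2
        have hM : P.countM a ⟨p.val,hpn⟩ ⟨q.val+2,hq2n⟩ = P'.countM a' p q + 1 := by
          rw [hcM, hcM', hcnteqM (by omega) (by omega) true, hpairM]
        have hV : P.countV a ⟨p.val,hpn⟩ ⟨q.val+2,hq2n⟩ = P'.countV a' p q + 1 := by
          rw [hcV, hcV', hcnteqM (by omega) (by omega) false, hpairV]
        exact ⟨by omega, by omega⟩
      · -- the small interval is itself suspicious in P
        have hptq : P.pt (q.val+2) = P.c i := by
          have e := hptC (q.val+1)
          rw [show (q.val+1)+1 = q.val+2 from by omega] at e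
          rw [e, show q.val+1 = (i:ℕ) from hqi, ← hci]
        have hS : P.Suspicious ⟨p.val, hpn⟩ ⟨q.val, hqn⟩ := by
          refine ⟨by rw [Fin.mk_le_mk]; omega, hsl, ?_⟩
          show P.foldMap (P.pt (q.val+2)) ∉ _
          rw [hptq]
          exact hciJ
        have I1 := (h _ _ hS).1
        have I2 := (h _ _ hS).2
        exact ⟨by omega, by omega⟩
  · -- i ≤ q.val
    have hiq : (i:ℕ) ≤ q.val := by omega
    have hImR : (i:ℕ) ≤ p.val → P'.foldMap '' Set.Icc (P'.c p) (P'.c q)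
        = P.foldMap '' Set.Icc (P.c ⟨p.val+2, hp2n⟩) (P.c ⟨q.val+2, hq2n⟩) := by
      intro hip
      have hcp : P'.c p = C (p.val+2) - 2*δ := by rw [hC'c p, hC'ge _ (by omega)]
      have hcq : P'.c q = C (q.val+2) - 2*δ := by rw [hC'c q, hC'ge _ (by omega)]
      have hep : P.c ⟨p.val+2, hp2n⟩ = C (p.val+2) := (hCc _ _).symm
      have heq2 : P.c ⟨q.val+2, hq2n⟩ = C (q.val+2) := (hCc _ _).symm
      have hpbig := hhigh (p.val+2) (by omega)
      refine Set.Subset.antisymm ?_ ?_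
      · rintro _ ⟨x, ⟨hx1, hx2⟩, rfl⟩
        rw [hcp] at hx1
        rw [hcq] at hx2
        refine ⟨x + 2*δ, ⟨?_, ?_⟩, ?_⟩
        · rw [hep]; linarith
        · rw [heq2]; linarith
        · have hy : C ((i:ℕ)+1) ≤ x + 2*δ := by
            rw [hδ'] at hpbig ⊢
            linarith [hδpos]
          have e := hfoldR (x + 2*δ) hy
          rw [show x + 2*δ - 2*δ = x from by ring] at e
          exact e.symm
      · rintro _ ⟨y, ⟨hy1, hy2⟩, rfl⟩
        rw [hep] at hy1
        rw [heq2] at hy2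
        refine ⟨y - 2*δ, ⟨?_, ?_⟩, ?_⟩
        · rw [hcp]; linarith
        · rw [hcq]; linarith
        · refine hfoldR y ?_
          rw [hδ'] at hpbig
          linarith [hδpos]
    have hcnteqR : (i:ℕ) ≤ p.val → ∀ b : Bool,
        (∑ m ∈ range P.n, (if p.val+2 ≤ m ∧ m ≤ q.val+2 ∧ Ab m = b then 1 else 0))
        = ∑ m ∈ range P'.n,
          (if p.val ≤ m ∧ m ≤ q.val ∧ (if m < (i:ℕ) then Ab m else Ab (m+2)) = b then 1 else 0) := by
      intro hip b
      have hge : ∀ m, (i:ℕ) ≤ m → m < P'.n →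
          (if p.val ≤ m ∧ m ≤ q.val ∧ (if m < (i:ℕ) then Ab m else Ab (m+2)) = b then (1:ℕ) else 0)
          = (if p.val+2 ≤ m+2 ∧ m+2 ≤ q.val+2 ∧ Ab (m+2) = b then 1 else 0) := by
        intro m h1 h2
        rw [if_neg (show ¬ m < (i:ℕ) by omega)]
        refine if_congr ?_ rfl rfl
        constructor
        · rintro ⟨x1,x2,x3⟩; exact ⟨by omega, by omega, x3⟩
        · rintro ⟨x1,x2,x3⟩; exact ⟨by omega, by omega, x3⟩
      have hid := sum_split P.n P'.n (i:ℕ) hn' hiN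
        (fun m => if p.val+2 ≤ m ∧ m ≤ q.val+2 ∧ Ab m = b then (1:ℕ) else 0)
        (fun m => if p.val ≤ m ∧ m ≤ q.val ∧ (if m < (i:ℕ) then Ab m else Ab (m+2)) = b then 1 else 0)
        hge
      have z1 : ∑ m ∈ range (i:ℕ),
          (if p.val+2 ≤ m ∧ m ≤ q.val+2 ∧ Ab m = b then (1:ℕ) else 0) = 0 :=
        Finset.sum_eq_zero fun m hm => by
          rw [mem_range] at hm; rw [if_neg]; rintro ⟨x1,_,_⟩; omega
      have z2 : ∑ m ∈ range (i:ℕ),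
          (if p.val ≤ m ∧ m ≤ q.val ∧ (if m < (i:ℕ) then Ab m else Ab (m+2)) = b then (1:ℕ) else 0) = 0 :=
        Finset.sum_eq_zero fun m hm => by
          rw [mem_range] at hm; rw [if_neg]; rintro ⟨x1,_,_⟩; omega
      have z3 : (if p.val+2 ≤ (i:ℕ) ∧ (i:ℕ) ≤ q.val+2 ∧ Ab (i:ℕ) = b then (1:ℕ) else 0) = 0 := by
        rw [if_neg]; rintro ⟨x1,_,_⟩; omega
      have z4 : (if p.val+2 ≤ (i:ℕ)+1 ∧ (i:ℕ)+1 ≤ q.val+2 ∧ Ab ((i:ℕ)+1) = b then (1:ℕ) else 0) = 0 := by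
        rw [if_neg]; rintro ⟨x1,_,_⟩; omega
      rw [z1, z2, z3, z4] at hid
      omega
    by_cases hcase2 : (i:ℕ) < p.val
    · -- strictly to the right of the crimp
      rw [hImR (by omega)] at hsl hsr
      rw [hEL2 hcase2] at hsl
      rw [hER2 (by omega)] at hsr
      have hS : P.Suspicious ⟨p.val+2, hp2n⟩ ⟨q.val+2, hq2n⟩ := by
        refine ⟨by rw [Fin.mk_le_mk]; omega, ?_, ?_⟩
        · show P.foldMap (P.pt (p.val+2)) ∉ _
          exact hsl
        · show P.foldMap (P.pt (q.val+2+2)) ∉ _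
          exact hsr
      have I1 := (h _ _ hS).1
      have I2 := (h _ _ hS).2
      have hM : P.countM a ⟨p.val+2,hp2n⟩ ⟨q.val+2,hq2n⟩ = P'.countM a' p q := by
        rw [hcM, hcM']; exact hcnteqR (by omega) true
      have hV : P.countV a ⟨p.val+2,hp2n⟩ ⟨q.val+2,hq2n⟩ = P'.countV a' p q := by
        rw [hcV, hcV']; exact hcnteqR (by omega) false
      exact ⟨by omega, by omega⟩
    · by_cases hcase3 : p.val = (i:ℕ)
      · -- left endpoint of the interval is the crimp crease i
        rw [hImR (by omega)] at hsl hsr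
        rw [hEL (by omega)] at hsl
        rw [hER2 (by omega)] at hsr
        by_cases hciJ : P.foldMap (P.c ⟨(i:ℕ)+1, hi⟩)
            ∈ P.foldMap '' Set.Icc (P.c ⟨p.val+2, hp2n⟩) (P.c ⟨q.val+2, hq2n⟩)
        · -- use interval [p, q+2] = [i, q+2]
          have hmidR : ∀ z, C ((i:ℕ)+1) ≤ z → z ≤ C ((i:ℕ)+2) →
              P.foldMap z ∈ P.foldMap '' Set.Icc (P.c ⟨p.val+2, hp2n⟩) (P.c ⟨q.val+2, hq2n⟩) := by
            intro z hz1 hz2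
            have hsplitb : ∀ j : Fin P.n, P.c j ≤ C ((i:ℕ)+1) ∨ C ((i:ℕ)+2) ≤ P.c j := by
              intro j
              rcases le_or_gt (j:ℕ) ((i:ℕ)+1) with hj | hj
              · left; rw [← hCj j]; exact hCmono hj
              · right; rw [← hCj j]; exact hCmono hj
            have hb := P.foldMap_between (C ((i:ℕ)+1)) (C ((i:ℕ)+2)) z hz1 hz2 hsplitb
            have hc2J : P.foldMap (C ((i:ℕ)+2))
                ∈ P.foldMap '' Set.Icc (P.c ⟨p.val+2, hp2n⟩) (P.c ⟨q.val+2, hq2n⟩) := by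
              refine ⟨C ((i:ℕ)+2), ⟨?_, ?_⟩, rfl⟩
              · rw [show P.c ⟨p.val+2,hp2n⟩ = C (p.val+2) from (hCc _ _).symm,
                  show p.val+2 = (i:ℕ)+2 from by omega]
              · rw [show P.c ⟨q.val+2,hq2n⟩ = C (q.val+2) from (hCc _ _).symm]
                exact hCmono (by omega)
            have hc1J : P.foldMap (C ((i:ℕ)+1))
                ∈ P.foldMap '' Set.Icc (P.c ⟨p.val+2, hp2n⟩) (P.c ⟨q.val+2, hq2n⟩) := by
              rw [← hci1]; exact hciJ
            rcases hb with hb | hb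
            · exact (P.ordConnected_image _ _).out hc1J hc2J hb
            · exact (P.ordConnected_image _ _).out hc2J hc1J hb
          have bigeq : P.foldMap '' Set.Icc (P.c ⟨p.val, hpn⟩) (P.c ⟨q.val+2, hq2n⟩)
              = P.foldMap '' Set.Icc (P.c ⟨p.val+2, hp2n⟩) (P.c ⟨q.val+2, hq2n⟩) := by
            refine Set.Subset.antisymm ?_ (Set.image_mono (Set.Icc_subset_Icc
              (P.mono.monotone (show (⟨p.val,hpn⟩:Fin P.n) ≤ ⟨p.val+2,hp2n⟩ from by
                rw [Fin.mk_le_mk]; omega)) le_rfl))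
            rintro _ ⟨x, ⟨hx1, hx2⟩, rfl⟩
            have hpc : P.c ⟨p.val, hpn⟩ = C (i:ℕ) := by
              rw [show P.c ⟨p.val,hpn⟩ = C p.val from (hCc _ _).symm, hcase3]
            rw [hpc] at hx1
            have hiC2 := hhigh ((i:ℕ)+2) le_rfl
            rcases le_total x (C ((i:ℕ)+1)) with h1 | h1
            · -- x ∈ [C i, C(i+1)] : reflect at crease i+1
              have hrefl : P.foldMap (2*P.c ⟨(i:ℕ)+1,hi⟩ - x) = P.foldMap x := by
                refine P.foldMap_reflect ⟨(i:ℕ)+1,hi⟩ x (fun j hj => ⟨?_, ?_⟩)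
                  (fun j hj => ⟨?_, ?_⟩)
                · have hj' : (j:ℕ) < (i:ℕ)+1 := hj
                  rw [← hCj j]
                  exact le_trans (hCmono (show (j:ℕ) ≤ (i:ℕ) by omega)) hx1
                · have hj' : (j:ℕ) < (i:ℕ)+1 := hj
                  rw [← hCj j, hci1]
                  have := hCmono (show (j:ℕ) ≤ (i:ℕ)+1 by omega)
                  linarith
                · have hj' : (i:ℕ)+1 < (j:ℕ) := hj
                  rw [← hCj j]
                  have h5 := hCmono (show (i:ℕ)+2 ≤ (j:ℕ) by omega)
                  rw [hδ'] at hiC2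
                  linarith [hδpos]
                · have hj' : (i:ℕ)+1 < (j:ℕ) := hj
                  rw [← hCj j, hci1]
                  have h5 := hCmono (show (i:ℕ)+2 ≤ (j:ℕ) by omega)
                  rw [hδ'] at hiC2
                  linarith
              rw [← hrefl]
              refine hmidR _ ?_ ?_
              · rw [hci1]; linarith
              · rw [hci1, hδ'] at *
                linarith
            · rcases le_total x (C ((i:ℕ)+2)) with h2 | h2
              · exact hmidR x h1 h2
              · refine ⟨x, ⟨?_, hx2⟩, rfl⟩
                rw [show P.c ⟨p.val+2,hp2n⟩ = C (p.val+2) from (hCc _ _).symm,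
                  show p.val+2 = (i:ℕ)+2 from by omega]
                exact h2
          have hS : P.Suspicious ⟨p.val, hpn⟩ ⟨q.val+2, hq2n⟩ := by
            refine ⟨by rw [Fin.mk_le_mk]; omega, ?_, ?_⟩
            · show P.foldMap (P.pt p.val) ∉ _
              rw [bigeq]; exact hsl
            · show P.foldMap (P.pt (q.val+2+2)) ∉ _
              rw [bigeq]; exact hsr
          have I1 := (h _ _ hS).1
          have I2 := (h _ _ hS).2
          have hM : P.countM a ⟨p.val,hpn⟩ ⟨q.val+2,hq2n⟩ = P'.countM a' p q + 1 := by
            rw [hcM, hcM', hcnteqM (by omega) (by omega) true, hpairM]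
          have hV : P.countV a ⟨p.val,hpn⟩ ⟨q.val+2,hq2n⟩ = P'.countV a' p q + 1 := by
            rw [hcV, hcV', hcnteqM (by omega) (by omega) false, hpairV]
          exact ⟨by omega, by omega⟩
        · -- interval [p+2, q+2] suspicious in P
          have hptp2 : P.pt (p.val+2) = P.c ⟨(i:ℕ)+1, hi⟩ := by
            have e := hptC (p.val+1)
            rw [show (p.val+1)+1 = p.val+2 from by omega] at e
            rw [e, show p.val+1 = (i:ℕ)+1 from by omega, ← hci1]
          have hS : P.Suspicious ⟨p.val+2, hp2n⟩ ⟨q.val+2, hq2n⟩ := by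
            refine ⟨by rw [Fin.mk_le_mk]; omega, ?_, ?_⟩
            · show P.foldMap (P.pt (p.val+2)) ∉ _
              rw [hptp2]; exact hciJ
            · show P.foldMap (P.pt (q.val+2+2)) ∉ _
              exact hsr
          have I1 := (h _ _ hS).1
          have I2 := (h _ _ hS).2
          have hM : P.countM a ⟨p.val+2,hp2n⟩ ⟨q.val+2,hq2n⟩ = P'.countM a' p q := by
            rw [hcM, hcM']; exact hcnteqR (by omega) true
          have hV : P.countV a ⟨p.val+2,hp2n⟩ ⟨q.val+2,hq2n⟩ = P'.countV a' p q := by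
            rw [hcV, hcV']; exact hcnteqR (by omega) false
          exact ⟨by omega, by omega⟩
      · -- p.val < i ≤ q.val : the crimp is inside the interval
        have hplt : p.val < (i:ℕ) := by omega
        have hq2big := hhigh (q.val+2) (by omega)
        have hImM : P'.foldMap '' Set.Icc (P'.c p) (P'.c q)
            = P.foldMap '' Set.Icc (P.c ⟨p.val, hpn⟩) (P.c ⟨q.val+2, hq2n⟩) := by
          have hcp : P'.c p = P.c ⟨p.val, hpn⟩ := by
            rw [hC'c p, hC'lt _ hplt, hCc _ hpn]
          have hcq : P'.c q = C (q.val+2) - 2*δ := by rw [hC'c q, hC'ge _ (by omega)]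
          have hep : P.c ⟨p.val, hpn⟩ = C p.val := (hCc _ _).symm
          have heq2 : P.c ⟨q.val+2, hq2n⟩ = C (q.val+2) := (hCc _ _).symm
          refine Set.Subset.antisymm ?_ ?_
          · rintro _ ⟨x, ⟨hx1, hx2⟩, rfl⟩
            rw [hcp] at hx1
            rw [hcq] at hx2
            rcases le_total x (C (i:ℕ)) with h1 | h1
            · refine ⟨x, ⟨hx1, ?_⟩, (hfoldL x h1).symm⟩
              rw [heq2]; linarith [hδpos]
            · refine ⟨x + 2*δ, ⟨?_, ?_⟩, ?_⟩
              · rw [hep]; rw [hep] at hx1; linarith [hδpos]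
              · rw [heq2]; linarith
              · have hy : C ((i:ℕ)+1) ≤ x + 2*δ := by
                  rw [hδ'] at hδpos ⊢
                  linarith
                have e := hfoldR (x + 2*δ) hy
                rw [show x + 2*δ - 2*δ = x from by ring] at e
                exact e.symm
          · rintro _ ⟨y, ⟨hy1, hy2⟩, rfl⟩
            rw [hep] at hy1
            rw [heq2] at hy2
            rcases le_total y (C (i:ℕ)) with h1 | h1
            · refine ⟨y, ⟨?_, ?_⟩, hfoldL y h1⟩
              · rw [hcp, hep]; exact hy1
              · rw [hcq]; linarith
            · rcases le_total y (C ((i:ℕ)+1)) with h2 | h2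
              · -- reflect at crease i
                have hlp := hlow p.val hplt
                have hrefl : P.foldMap (2*P.c i - y) = P.foldMap y := by
                  refine P.foldMap_reflect i y (fun j hj => ⟨?_, ?_⟩) (fun j hj => ⟨?_, ?_⟩)
                  · have hj' : (j:ℕ) < (i:ℕ) := hj
                    rw [← hCj j]
                    exact le_trans (hCmono (le_of_lt hj')) h1
                  · have hj' : (j:ℕ) < (i:ℕ) := hj
                    rw [← hCj j, hci]
                    have := hlow (j:ℕ) hj'
                    rw [hδ'] at this
                    linarith
                  · have hj' : (i:ℕ) < (j:ℕ) := hj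
                    rw [← hCj j]
                    have h5 := hCmono (show (i:ℕ)+1 ≤ (j:ℕ) by omega)
                    linarith
                  · have hj' : (i:ℕ) < (j:ℕ) := hj
                    rw [← hCj j, hci]
                    have h5 := hCmono (show (i:ℕ) ≤ (j:ℕ) by omega)
                    linarith
                refine ⟨2*P.c i - y, ⟨?_, ?_⟩, ?_⟩
                · rw [hcp, hep, hci]
                  linarith [hδ', hlp, h2]
                · rw [hcq, hci]
                  linarith
                · rw [hfoldL _ (by rw [hci]; linarith)]
                  exact hrefl
              · refine ⟨y - 2*δ, ⟨?_, ?_⟩, hfoldR y h2⟩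
                · rw [hcp, hep]
                  have hlp := hlow p.val hplt
                  linarith [hδ', hlp, h2]
                · rw [hcq]; linarith
        rw [hImM] at hsl hsr
        rw [hEL (by omega)] at hsl
        rw [hER2 (by omega)] at hsr
        have hS : P.Suspicious ⟨p.val, hpn⟩ ⟨q.val+2, hq2n⟩ := by
          refine ⟨by rw [Fin.mk_le_mk]; omega, ?_, ?_⟩
          · show P.foldMap (P.pt p.val) ∉ _
            exact hsl
          · show P.foldMap (P.pt (q.val+2+2)) ∉ _
            exact hsr
        have I1 := (h _ _ hS).1
        have I2 := (h _ _ hS).2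
        have hM : P.countM a ⟨p.val,hpn⟩ ⟨q.val+2,hq2n⟩ = P'.countM a' p q + 1 := by
          rw [hcM, hcM', hcnteqM (by omega) (by omega) true, hpairM]
        have hV : P.countV a ⟨p.val,hpn⟩ ⟨q.val+2,hq2n⟩ = P'.countV a' p q + 1 := by
          rw [hcV, hcV', hcnteqM (by omega) (by omega) false, hpairV]
        exact ⟨by omega, by omega⟩
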